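/- arXiv:1908.09378 — 2 statements merged into one kernel-verified Lean document; each statement's English description precedes it below -/
import Mathlib

section
/- Let d ≥ 1 and i ≥ 1 be natural numbers. Suppose s, b : ℕ → ℕ track the sizes of signal buffer S_i and bucket B_i of level i between consecutive executions of Resolve(i), i.e., s 0 = 0 and b 0 = d·2^(2i+1), and each execution of Resolve(i−1) adds at most d·2^(2(i−1)) elements to S_i and removes at most d·2^(2(i−1)) elements from B_i: for all t, s (t+1) ≤ s t + d·2^(2(i−1)) and b t ≤ b (t+1) + d·2^(2(i−1)). Then after at most 4 executions of Resolve(i−1), the preconditions of Resolve(i) remain satisfied: for all t ≤ 4, s t ≤ d·2^(2i) and b t ≥ d·2^(2i). -/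
/-!
Each `Resolve(i-1)` changes `|S_i|` and `|B_i|` by at most `c = d·2^(2(i-1))`, so after `t ≤ 4`
of them `|S_i| ≤ 4c = d·2^(2i)` and `|B_i| ≥ d·2^(2i+1) - 4c = d·2^(2i)`.
-/

section BoundedIncrements

variable {α : Type*} [AddCommMonoid α] [PartialOrder α] [IsOrderedAddMonoid α]

theorem le_add_nsmul_of_forall_succ_le_add {f : ℕ → α} {c : α} (h : ∀ t, f (t + 1) ≤ f t + c)
    (t : ℕ) : f t ≤ f 0 + t • c := by
  induction t with
  | zero => simp
  | succ n ih =>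
    calc f (n + 1) ≤ f n + c := h n
      _ ≤ f 0 + n • c + c := by gcongr
      _ = f 0 + (n + 1) • c := by rw [succ_nsmul, add_assoc]

theorem le_add_nsmul_of_forall_le_succ_add {f : ℕ → α} {c : α} (h : ∀ t, f t ≤ f (t + 1) + c)
    (t : ℕ) : f 0 ≤ f t + t • c := by
  induction t with
  | zero => simp
  | succ n ih =>
    calc f 0 ≤ f n + n • c := ih
      _ ≤ f (n + 1) + c + n • c := by gcongr; exact h n
      _ = f (n + 1) + (n + 1) • c := by rw [succ_nsmul', add_assoc]

end BoundedIncrements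

theorem four_mul_pow_two_mul_sub_one {i : ℕ} (hi : 1 ≤ i) : 4 * 2 ^ (2 * (i - 1)) = 2 ^ (2 * i) := by
  obtain ⟨j, rfl⟩ := Nat.exists_eq_add_of_le' hi
  rw [Nat.add_sub_cancel, mul_add, pow_add]
  ring

theorem parBucketHeap_level_preconditions_general
    (d i : ℕ) (hi : 1 ≤ i) (s b : ℕ → ℕ)
    (hs0 : s 0 = 0) (hb0 : b 0 = d * 2 ^ (2 * i + 1))
    (hs : ∀ t, s (t + 1) ≤ s t + d * 2 ^ (2 * (i - 1)))
    (hb : ∀ t, b t ≤ b (t + 1) + d * 2 ^ (2 * (i - 1))) :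
    ∀ t ≤ 4, s t ≤ d * 2 ^ (2 * i) ∧ d * 2 ^ (2 * i) ≤ b t := by
  intro t ht
  set c := d * 2 ^ (2 * (i - 1))
  have h4c : 4 * c = d * 2 ^ (2 * i) := by
    rw [← four_mul_pow_two_mul_sub_one hi]; ring
  have htc : t * c ≤ 4 * c := Nat.mul_le_mul_right c ht
  have hs_t := le_add_nsmul_of_forall_succ_le_add hs t
  have hb_t := le_add_nsmul_of_forall_le_succ_add hb t
  rw [smul_eq_mul, hs0] at hs_t
  rw [smul_eq_mul, hb0, pow_succ, ← mul_assoc, ← h4c] at hb_t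
  rw [← h4c]
  omega

/-- Theorem 1, part (i): sizes of `S_i` and `B_i` between consecutive executions of
`Resolve(i)` stay within the preconditions for at most 4 executions of `Resolve(i-1)`. -/
theorem parBucketHeap_level_preconditions
    (d i : ℕ) (hd : 1 ≤ d) (hi : 1 ≤ i) (s b : ℕ → ℕ)
    (hs0 : s 0 = 0) (hb0 : b 0 = d * 2 ^ (2 * i + 1))
    (hs : ∀ t, s (t + 1) ≤ s t + d * 2 ^ (2 * (i - 1)))
    (hb : ∀ t, b t ≤ b (t + 1) + d * 2 ^ (2 * (i - 1))) :
    ∀ t ≤ 4, s t ≤ d * 2 ^ (2 * i) ∧ d * 2 ^ (2 * i) ≤ b t :=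
  parBucketHeap_level_preconditions_general d i hi s b hs0 hb0 hs hb
end

section
/- Define start(i, k) := 5·k·4^i − 5 + (4^i − 1)/3 and end(i, k) := start(i, k) + 4^i for natural numbers i and k ≥ 1. Then this schedule satisfies all dependency constraints of the parallel bucket heap: (a) start(0, k) = 5k − 5 for all k ≥ 1; (b) for all k ≥ 2, end(0, k−1) ≤ start(0, k); (c) for all i ≥ 1 and k ≥ 1, end(i−1, 4k) ≤ start(i, k); and (d) for all i ≥ 0 and m ≥ 1, end(i+1, m) ≤ start(i, 4m+1). In particular, with the k-th operation performed at timestep 5k − 5 and Resolve(i) taking at most 4^i timesteps, all dependencies are satisfied. -/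
/-- Starting timestep of the `k`-th execution of `Resolve(i)`. -/
def resolveStart (i k : ℕ) : ℤ := 5 * k * 4 ^ i - 5 + (4 ^ i - 1) / 3

/-- Ending timestep of the `k`-th execution of `Resolve(i)`: the resolve takes `4^i` timesteps. -/
def resolveEnd (i k : ℕ) : ℤ := resolveStart i k + 4 ^ i

/-!
Clearing the exact division by 3 gives `3 · start(i, k) = (15k + 1) · 4^i − 16`, and
`3 · end(i, k) = (15k + 4) · 4^i − 16`. In these closed forms the dependencies across levels
become identities, `end(i, 4k) = start(i + 1, k)` and `end(i + 1, m) = start(i, 4m + 1)`, so the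
schedule is tight there, while on a single level one execution ends `4^(i+1)` timesteps before
the next one starts.
-/

lemma three_mul_resolveStart (i k : ℕ) :
    3 * resolveStart i k = (15 * k + 1) * 4 ^ i - 16 := by
  have hdvd : (3 : ℤ) ∣ 4 ^ i - 1 := by
    simpa using sub_dvd_pow_sub_pow (4 : ℤ) 1 i
  rw [resolveStart, mul_add, Int.mul_ediv_cancel' hdvd]
  ring

lemma three_mul_resolveEnd (i k : ℕ) :
    3 * resolveEnd i k = (15 * k + 4) * 4 ^ i - 16 := by
  rw [resolveEnd, mul_add, three_mul_resolveStart]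
  ring

lemma resolveStart_zero (k : ℕ) : resolveStart 0 k = 5 * k - 5 := by
  simp [resolveStart]

lemma resolveEnd_add_pow_succ (i k : ℕ) :
    resolveEnd i k + 4 ^ (i + 1) = resolveStart i (k + 1) := by
  refine mul_left_cancel₀ (three_ne_zero (α := ℤ)) ?_
  rw [mul_add, three_mul_resolveEnd, three_mul_resolveStart]
  push_cast
  ring

lemma resolveEnd_four_mul (i k : ℕ) : resolveEnd i (4 * k) = resolveStart (i + 1) k := by
  refine mul_left_cancel₀ (three_ne_zero (α := ℤ)) ?_
  rw [three_mul_resolveEnd, three_mul_resolveStart]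
  push_cast
  ring

lemma resolveEnd_succ (i m : ℕ) : resolveEnd (i + 1) m = resolveStart i (4 * m + 1) := by
  refine mul_left_cancel₀ (three_ne_zero (α := ℤ)) ?_
  rw [three_mul_resolveEnd, three_mul_resolveStart]
  push_cast
  ring

/-- Lemma 3: the schedule `start(i,k) = 5k·4^i − 5 + (4^i − 1)/3`, with `Resolve(i)` taking
at most `4^i` timesteps, satisfies all dependency constraints of the parallel bucket heap. -/
theorem resolution_schedule_satisfies_dependencies :
    (∀ k : ℕ, 1 ≤ k → resolveStart 0 k = 5 * k - 5) ∧
    (∀ k : ℕ, 2 ≤ k → resolveEnd 0 (k - 1) ≤ resolveStart 0 k) ∧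
    (∀ i k : ℕ, 1 ≤ i → 1 ≤ k → resolveEnd (i - 1) (4 * k) ≤ resolveStart i k) ∧
    (∀ i m : ℕ, 1 ≤ m → resolveEnd (i + 1) m ≤ resolveStart i (4 * m + 1)) := by
  refine ⟨fun k _ => resolveStart_zero k, ?_, ?_, fun i m _ => (resolveEnd_succ i m).le⟩
  · intro k hk
    obtain ⟨j, rfl⟩ : ∃ j, k = j + 1 := ⟨k - 1, by omega⟩
    rw [Nat.add_sub_cancel, ← resolveEnd_add_pow_succ]
    exact le_add_of_nonneg_right (by positivity)
  · intro i k hi _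
    obtain ⟨j, rfl⟩ : ∃ j, i = j + 1 := ⟨i - 1, by omega⟩
    exact (resolveEnd_four_mul j k).le
end
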